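/- For v, v' ∈ {0,1}^n, the tensor-product Hadamard unitaries satisfy |⟨x| H^v H^{v'} |y⟩| ≤ 2^{−dist(v,v')/2} for all computational basis vectors |x⟩, |y⟩, where dist is the Hamming distance. Consequently, a binary code C ⊆ {0,1}^n with minimum distance γn yields a family {H^v : v ∈ C} of γ-approximately mutually unbiased bases of (ℂ²)^{⊗n}. -/
import Mathlib


open Matrix
open scoped BigOperators

/-- The single-qubit Hadamard matrix `H = (1/√2)[[1,1],[1,−1]]`. -/
noncomputable def Hmat : Matrix (Fin 2) (Fin 2) ℂ :=
  (((Real.sqrt 2)⁻¹ : ℝ) : ℂ) • !![1, 1; 1, -1]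

/-- `H^v = H^{v₁} ⊗ … ⊗ H^{v_n}` acting on `(ℂ²)^{⊗n}`, entrywise:
`(H^v)_{x,y} = Π_i (H^{v_i})_{x_i, y_i}`. -/
noncomputable def Hpow (n : ℕ) (v : Fin n → Fin 2) :
    Matrix (Fin n → Fin 2) (Fin n → Fin 2) ℂ :=
  fun x y => ∏ i, (if v i = 1 then Hmat else (1 : Matrix (Fin 2) (Fin 2) ℂ)) (x i) (y i)

/-- The tensor-product Hadamard unitaries satisfy
`|⟨x| H^v H^{v'} |y⟩| ≤ 2^{−dist(v,v')/2}` where `dist` is the Hamming distance.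
Consequently, a binary code `C ⊆ {0,1}^n` with minimum distance `γ n` yields a family
`{H^v : v ∈ C}` of `γ`-approximately mutually unbiased bases of `(ℂ²)^{⊗n}`. -/
lemma Hsq : Hmat * Hmat = 1 := by
  have h2 : ((Real.sqrt 2 : ℝ) : ℂ)⁻¹ * ((Real.sqrt 2 : ℝ) : ℂ)⁻¹ = 1/2 := by
    rw [← mul_inv]
    norm_cast
    rw [Real.mul_self_sqrt (by norm_num)]
    norm_num
  ext i j
  fin_cases i <;> fin_cases j <;>
    simp [Hmat, Matrix.mul_apply, Fin.sum_univ_two, Matrix.one_apply] <;> linear_combination 2*h2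

lemma Hnorm (a b : Fin 2) : ‖Hmat a b‖ = (Real.sqrt 2)⁻¹ := by
  fin_cases a <;> fin_cases b <;>
    simp [Hmat, Complex.norm_real, abs_of_nonneg (inv_nonneg.2 (Real.sqrt_nonneg 2))]

lemma factor (n : ℕ) (v v' : Fin n → Fin 2) (x y : Fin n → Fin 2) :
    (Hpow n v * Hpow n v') x y =
      ∏ i, (((if v i = 1 then Hmat else 1) * (if v' i = 1 then Hmat else 1)) (x i) (y i)) := by
  simp only [Matrix.mul_apply, Hpow]
  rw [Fintype.prod_sum (fun i j => (if v i = 1 then Hmat else 1) (x i) j * (if v' i = 1 then Hmat else 1) j (y i))]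
  simp [Finset.prod_mul_distrib]

lemma entry_bd (bi bj a b : Fin 2) :
    ‖((if bi = 1 then Hmat else 1) * (if bj = 1 then Hmat else 1)) a b‖ ≤
      if bi = bj then 1 else (Real.sqrt 2)⁻¹ := by
  have hone : ∀ a b : Fin 2, ‖(1 : Matrix (Fin 2) (Fin 2) ℂ) a b‖ ≤ 1 := by
    intro a b; rw [Matrix.one_apply]; split <;> simp
  have h0 : ¬ (0 : Fin 2) = 1 := by decide
  have h1 : ¬ (1 : Fin 2) = 0 := by decide
  have key2 : ∀ c : Fin 2, c = 0 ∨ c = 1 := by decide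
  rcases key2 bi with rfl | rfl <;> rcases key2 bj with rfl | rfl
  · simp only [if_neg h0, if_pos rfl, one_mul]; exact hone a b
  · simp only [if_neg h0, if_pos rfl, one_mul]; exact (Hnorm a b).le
  · simp only [if_pos rfl, if_neg h0, if_neg h1, mul_one]; exact (Hnorm a b).le
  · simp only [if_true, eq_self_iff_true]; rw [Hsq]; exact hone a b

lemma key (n : ℕ) (v v' x y : Fin n → Fin 2) :
    ‖(Hpow n v * Hpow n v') x y‖ ≤ (2 : ℝ) ^ (-(hammingDist v v' : ℝ) / 2) := by
  have hs : (Real.sqrt 2)⁻¹ = (2 : ℝ) ^ (-(1:ℝ)/2) := by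
    rw [Real.sqrt_eq_rpow, ← Real.rpow_neg (by norm_num)]
    norm_num
  rw [factor, norm_prod]
  calc ∏ i, ‖((if v i = 1 then Hmat else 1) * (if v' i = 1 then Hmat else 1)) (x i) (y i)‖
      ≤ ∏ i, (if v i = v' i then (1:ℝ) else (Real.sqrt 2)⁻¹) := by
        apply Finset.prod_le_prod (fun i _ => norm_nonneg _)
        intro i _
        exact entry_bd (v i) (v' i) (x i) (y i)
    _ = ((Real.sqrt 2)⁻¹) ^ (hammingDist v v') := by
        rw [Finset.prod_ite, Finset.prod_const_one, Finset.prod_const, one_mul]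
        rfl
    _ = (2 : ℝ) ^ (-(hammingDist v v' : ℝ) / 2) := by
        rw [hs, ← Real.rpow_natCast ((2:ℝ) ^ (-(1:ℝ)/2)) (hammingDist v v'),
          ← Real.rpow_mul (by norm_num)]
        congr 1; ring

lemma Hpow_conjT (n : ℕ) (u : Fin n → Fin 2) : (Hpow n u)ᴴ = Hpow n u := by
  ext x y
  simp only [Matrix.conjTranspose_apply, Hpow, star_prod]
  have h : ∀ b : Fin 2, ∀ a c : Fin 2,
      star ((if b = 1 then Hmat else 1) a c) = (if b = 1 then Hmat else 1) c a := by
    intro b a c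
    fin_cases b <;> fin_cases a <;> fin_cases c <;>
      simp [Hmat, Matrix.one_apply, ← Complex.ofReal_inv]
  exact Finset.prod_congr rfl fun i _ => h (u i) (y i) (x i)

theorem stmt12 (n : ℕ) (hn : 0 < n) :
    (∀ v v' : Fin n → Fin 2, ∀ x y : Fin n → Fin 2,
      ‖(Hpow n v * Hpow n v') x y‖ ≤ (2 : ℝ) ^ (-(hammingDist v v' : ℝ) / 2)) ∧
    ∀ (γ : ℝ), 0 < γ → ∀ C : Finset (Fin n → Fin 2),
      (∀ u ∈ C, ∀ v ∈ C, u ≠ v → γ * n ≤ hammingDist u v) →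
      ∀ u ∈ C, ∀ v ∈ C, u ≠ v → ∀ x y : Fin n → Fin 2,
        ‖((Hpow n u)ᴴ * Hpow n v) x y‖ ≤ ((2 : ℝ) ^ n) ^ (-(γ / 2)) := by
  refine ⟨key n, ?_⟩
  intro γ hγ C hC u hu v hv huv x y
  rw [Hpow_conjT]
  calc ‖(Hpow n u * Hpow n v) x y‖ ≤ (2 : ℝ) ^ (-(hammingDist u v : ℝ) / 2) := key n u v x y
    _ ≤ ((2 : ℝ) ^ n) ^ (-(γ / 2)) := by
        rw [← Real.rpow_natCast (2:ℝ) n, ← Real.rpow_mul (by norm_num)]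
        apply Real.rpow_le_rpow_of_exponent_le (by norm_num)
        have := hC u hu v hv huv
        nlinarith
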